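/- Let X be a Hilbert space and let φ : X → ℝ ∪ {+∞} be a proper, prox-bounded, lower semicontinuous function that is weakly sequentially lower semicontinuous, and let x̄ ∈ dom φ. If x̄ is a strong local minimizer of φ with modulus σ > 0, then there exists λ̄ > 0 such that for every λ ∈ (0, λ̄) the point x̄ is a strong local minimizer of the Moreau envelope e_λφ with modulus σ/(1 + σλ). -/

import Mathlib

open Filter Topology

variable {X : Type*}

/-- Moreau envelope `e_λφ(x) = inf_w { φ(w) + (1/(2λ))‖w − x‖² }`, valued in `EReal`. -/
noncomputable def moreauEnv [NormedAddCommGroup X] (lam : ℝ) (φ : X → EReal) (x : X) : EReal :=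
  ⨅ w : X, φ w + (((1 / (2 * lam)) * ‖w - x‖ ^ 2 : ℝ) : EReal)

/-- Proximal mapping `P_λφ(x) = argmin_w { φ(w) + (1/(2λ))‖w − x‖² }`. -/
def proxSet [NormedAddCommGroup X] (lam : ℝ) (φ : X → EReal) (x : X) : Set X :=
  {w : X | ∀ v : X,
    φ w + (((1 / (2 * lam)) * ‖w - x‖ ^ 2 : ℝ) : EReal)
      ≤ φ v + (((1 / (2 * lam)) * ‖v - x‖ ^ 2 : ℝ) : EReal)}

/-- A function `X → ℝ ∪ {+∞}` modeled as `X → EReal`: proper means not identically `+∞`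
and never `−∞`. -/
def IsProper [NormedAddCommGroup X] (φ : X → EReal) : Prop :=
  (∃ x : X, φ x ≠ ⊤) ∧ ∀ x : X, φ x ≠ ⊥

/-- Prox-boundedness: `φ(y) ≥ α‖y − x̄‖² + β` for some `α, β ∈ ℝ`, `x̄ ∈ X`. -/
def ProxBounded [NormedAddCommGroup X] (φ : X → EReal) : Prop :=
  ∃ (a b : ℝ) (x0 : X), ∀ y : X, ((a * ‖y - x0‖ ^ 2 + b : ℝ) : EReal) ≤ φ y

/-- Weak convergence of a sequence: `⟨f, u k⟩ → ⟨f, x⟩` for every continuous linear functional. -/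
def WeakConv [NormedAddCommGroup X] [NormedSpace ℝ X] (u : ℕ → X) (x : X) : Prop :=
  ∀ f : X →L[ℝ] ℝ, Tendsto (fun k => f (u k)) atTop (𝓝 (f x))

/-- Weak sequential lower semicontinuity. -/
def WeakSeqLSC [NormedAddCommGroup X] [NormedSpace ℝ X] (φ : X → EReal) : Prop :=
  ∀ (x : X) (u : ℕ → X), WeakConv u x → φ x ≤ liminf (fun k => φ (u k)) atTop

/-- Sequential form of reflexivity: every bounded sequence has a weakly convergent
subsequence. -/
def SeqReflexive (X : Type*) [NormedAddCommGroup X] [NormedSpace ℝ X] : Prop :=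
  ∀ u : ℕ → X, (∃ C : ℝ, ∀ k, ‖u k‖ ≤ C) →
    ∃ (s : ℕ → ℕ) (z : X), StrictMono s ∧ WeakConv (u ∘ s) z

/-- Local minimizer. -/
def LocalMin [NormedAddCommGroup X] (g : X → EReal) (x0 : X) : Prop :=
  ∃ ε > (0 : ℝ), ∀ x : X, ‖x - x0‖ < ε → g x0 ≤ g x

/-- Strong local minimizer with modulus `σ`. -/
def StrongLocalMin [NormedAddCommGroup X] (g : X → EReal) (x0 : X) (σ : ℝ) : Prop :=
  ∃ ε > (0 : ℝ), ∀ x : X, ‖x - x0‖ < ε →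
    g x0 + (((σ / 2) * ‖x - x0‖ ^ 2 : ℝ) : EReal) ≤ g x

/-- The zero functional `0 ∈ X*` is a proximal subgradient of `φ` at `x0`. -/
def ZeroProxSubgradient [NormedAddCommGroup X] [NormedSpace ℝ X] (φ : X → EReal) (x0 : X) :
    Prop :=
  ∃ r > (0 : ℝ), ∃ ε > (0 : ℝ), ∀ x : X, ‖x - x0‖ < ε →
    φ x0 + ((((0 : X →L[ℝ] ℝ) (x - x0)) - (r / 2) * ‖x - x0‖ ^ 2 : ℝ) : EReal) ≤ φ x


/- Near `xb`, the strong minimality `φ w ≥ φ xb + σ/2 ‖w - xb‖²` together with the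
Moreau envelope of the quadratic `σ/2 ‖·‖²`, which is `σ/(2(1 + σλ)) ‖·‖²`, gives the bound
`φ w + ‖w - x‖²/(2λ) ≥ φ xb + σ/(2(1 + σλ)) ‖x - xb‖²`. Far from `xb`, prox-boundedness makes
`φ` grow at worst like a fixed quadratic, which the penalty `‖w - x‖²/(2λ)` overwhelms once `λ`
is small; so those points do not spoil the bound either. Since `e_λφ(xb) ≤ φ(xb)`, this is the
strong minimality of `e_λφ` at `xb`. -/

theorem EReal.coe_le_add_coe {s r p : ℝ} {y : EReal} (hy : (r : EReal) ≤ y) (h : s ≤ r + p) :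
    (s : EReal) ≤ y + p :=
  calc (s : EReal) ≤ ((r + p : ℝ) : EReal) := EReal.coe_le_coe_iff.mpr h
    _ = (r : EReal) + p := EReal.coe_add r p
    _ ≤ y + p := add_le_add_left hy _

section Quadratic

variable [NormedAddCommGroup X] [InnerProductSpace ℝ X]

theorem div_one_add_mul_sq_norm_le {σ lam : ℝ} (hlam : 0 < lam) (hs : 0 < 1 + σ * lam)
    (u v : X) :
    σ / (1 + σ * lam) / 2 * ‖v‖ ^ 2 ≤ σ / 2 * ‖u‖ ^ 2 + 1 / (2 * lam) * ‖u - v‖ ^ 2 := by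
  have hgap : σ / 2 * ‖u‖ ^ 2 + 1 / (2 * lam) * ‖u - v‖ ^ 2 - σ / (1 + σ * lam) / 2 * ‖v‖ ^ 2
      = ‖(1 + σ * lam) • u - v‖ ^ 2 / (2 * lam * (1 + σ * lam)) := by
    rw [norm_sub_sq_real, norm_sub_sq_real, norm_smul, real_inner_smul_left, Real.norm_eq_abs,
      abs_of_pos hs]
    field_simp
    ring
  have : 0 ≤ ‖(1 + σ * lam) • u - v‖ ^ 2 / (2 * lam * (1 + σ * lam)) := by positivity
  linarith

theorem coe_add_le_penalty_of_quadratic_growth {φ : X → EReal} {xb x w : X} {m σ lam : ℝ}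
    (hlam : 0 < lam) (hs : 0 < 1 + σ * lam)
    (hw : (m : EReal) + ((σ / 2 * ‖w - xb‖ ^ 2 : ℝ) : EReal) ≤ φ w) :
    ((m + σ / (1 + σ * lam) / 2 * ‖x - xb‖ ^ 2 : ℝ) : EReal)
      ≤ φ w + (((1 / (2 * lam)) * ‖w - x‖ ^ 2 : ℝ) : EReal) := by
  refine EReal.coe_le_add_coe (r := m + σ / 2 * ‖w - xb‖ ^ 2) (by exact_mod_cast hw) ?_
  have := div_one_add_mul_sq_norm_le hlam hs (w - xb) (x - xb)
  rw [sub_sub_sub_cancel_right] at this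
  linarith

end Quadratic

section MoreauEnvelope

variable [NormedAddCommGroup X]

theorem moreauEnv_le (lam : ℝ) (φ : X → EReal) (x : X) : moreauEnv lam φ x ≤ φ x := by
  unfold moreauEnv
  exact iInf_le_of_le x (by simp)

theorem ProxBounded.ne_bot {φ : X → EReal} (hpb : ProxBounded φ) (y : X) : φ y ≠ ⊥ := by
  obtain ⟨a, b, x0, h⟩ := hpb
  exact ne_bot_of_le_ne_bot (EReal.coe_ne_bot _) (h y)

theorem ProxBounded.exists_nonpos {φ : X → EReal} (hpb : ProxBounded φ) :
    ∃ a ≤ (0 : ℝ), ∃ (b : ℝ) (x0 : X), ∀ y : X, ((a * ‖y - x0‖ ^ 2 + b : ℝ) : EReal) ≤ φ y := by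
  obtain ⟨a, b, x0, h⟩ := hpb
  refine ⟨min a 0, min_le_right a 0, b, x0, fun y => le_trans ?_ (h y)⟩
  gcongr
  exact min_le_left a 0

theorem ProxBounded.exists_le_penalty_of_far {φ : X → EReal} (hpb : ProxBounded φ) (xb : X)
    {ε : ℝ} (hε : 0 < ε) (R : ℝ) :
    ∃ lamb > (0 : ℝ), ∀ lam : ℝ, 0 < lam → lam < lamb → ∀ x w : X,
      ‖x - xb‖ < ε / 2 → ε ≤ ‖w - xb‖ →
        (R : EReal) ≤ φ w + (((1 / (2 * lam)) * ‖w - x‖ ^ 2 : ℝ) : EReal) := by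
  obtain ⟨a, ha, b, x0, hlow⟩ := hpb.exists_nonpos
  set d := ‖xb - x0‖
  set K := max (R - 2 * a * d ^ 2 - b) 1
  have hK : 0 < K := lt_of_lt_of_le one_pos (le_max_right _ _)
  have ha₁ : 0 < 1 - a := by linarith
  refine ⟨min (1 / (32 * (1 - a))) (ε ^ 2 / (16 * K)), lt_min (by positivity) (by positivity),
    fun lam hlam hlt x w hx hw => EReal.coe_le_add_coe (hlow w) ?_⟩
  have hlam₁ : 32 * (1 - a) * lam < 1 := by
    have := hlt.trans_le (min_le_left _ _)
    rwa [lt_div_iff₀ (by linarith), mul_comm] at this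
  have hlam₂ : 16 * K * lam < ε ^ 2 := by
    have := hlt.trans_le (min_le_right _ _)
    rwa [lt_div_iff₀ (by positivity), mul_comm] at this
  set t := ‖w - xb‖
  have hwx : t / 2 ≤ ‖w - x‖ := by
    have := norm_sub_norm_le (w - xb) (x - xb)
    rw [sub_sub_sub_cancel_right] at this
    linarith
  have hwx0 : ‖w - x0‖ ≤ t + d := by
    simpa only [dist_eq_norm] using dist_triangle w xb x0
  have hgrowth : a * ‖w - x0‖ ^ 2 ≥ 2 * a * t ^ 2 + 2 * a * d ^ 2 := by
    have : ‖w - x0‖ ^ 2 ≤ 2 * t ^ 2 + 2 * d ^ 2 := by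
      nlinarith [norm_nonneg (w - x0), sq_nonneg (t - d)]
    nlinarith
  have hpen : 1 / (2 * lam) * ‖w - x‖ ^ 2 ≥ t ^ 2 / (8 * lam) := by
    calc 1 / (2 * lam) * ‖w - x‖ ^ 2 ≥ 1 / (2 * lam) * (t / 2) ^ 2 := by
          gcongr
      _ = t ^ 2 / (8 * lam) := by field_simp; ring
  have hcoef : t ^ 2 / (16 * lam) ≥ - (2 * a) * t ^ 2 := by
    rw [ge_iff_le, le_div_iff₀ (by positivity)]
    nlinarith [sq_nonneg t]
  have hlarge : t ^ 2 / (16 * lam) ≥ K := by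
    rw [ge_iff_le, le_div_iff₀ (by positivity)]
    nlinarith [pow_le_pow_left₀ hε.le hw 2]
  have : t ^ 2 / (8 * lam) = 2 * (t ^ 2 / (16 * lam)) := by field_simp; ring
  linarith [le_max_left (R - 2 * a * d ^ 2 - b) 1]

end MoreauEnvelope

theorem statement15_general [NormedAddCommGroup X] [InnerProductSpace ℝ X]
    (φ : X → EReal) (hpb : ProxBounded φ)
    (xb : X) (hdom : φ xb ≠ ⊤)
    (σ : ℝ) (hσ : 0 < σ) (hmin : StrongLocalMin φ xb σ) :
    ∃ lamb > (0 : ℝ), ∀ lam : ℝ, 0 < lam → lam < lamb →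
      StrongLocalMin (moreauEnv lam φ) xb (σ / (1 + σ * lam)) := by
  obtain ⟨ε, hε, hnear⟩ := hmin
  lift φ xb to ℝ using ⟨hdom, hpb.ne_bot xb⟩ with m hm
  obtain ⟨lamb, hlamb, hfar⟩ := hpb.exists_le_penalty_of_far xb hε (m + σ * ε ^ 2 / 8)
  refine ⟨lamb, hlamb, fun lam hlam hlt => ⟨ε / 2, by positivity, fun x hx => ?_⟩⟩
  have hs : 0 < 1 + σ * lam := by positivity
  set c := σ / (1 + σ * lam) / 2 * ‖x - xb‖ ^ 2 with hc_def
  have hc : c ≤ σ * ε ^ 2 / 8 := by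
    have : σ / (1 + σ * lam) ≤ σ := div_le_self hσ.le (by nlinarith)
    have : ‖x - xb‖ ^ 2 ≤ ε ^ 2 / 4 := by nlinarith [norm_nonneg (x - xb)]
    calc c ≤ σ / 2 * (ε ^ 2 / 4) := by rw [hc_def]; gcongr
      _ = σ * ε ^ 2 / 8 := by ring
  calc moreauEnv lam φ xb + (c : EReal) ≤ ((m + c : ℝ) : EReal) := by
        rw [EReal.coe_add, hm]; exact add_le_add_left (moreauEnv_le lam φ xb) _
    _ ≤ moreauEnv lam φ x := le_iInf fun w => ?_
  rcases lt_or_ge ‖w - xb‖ ε with hw | hw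
  · exact coe_add_le_penalty_of_quadratic_growth hlam hs (hnear w hw)
  · exact le_trans (by exact_mod_cast (by linarith : m + c ≤ m + σ * ε ^ 2 / 8))
      (hfar lam hlam hlt x w hx hw)

/-- a strong local minimizer of `φ` with modulus `σ > 0` is a strong local
minimizer of `e_λφ` with modulus `σ/(1 + σλ)` for all small `λ > 0`. -/
theorem statement15 [NormedAddCommGroup X] [InnerProductSpace ℝ X] [CompleteSpace X]
    (φ : X → EReal) (hproper : IsProper φ) (hpb : ProxBounded φ)
    (hlsc : LowerSemicontinuous φ) (hwlsc : WeakSeqLSC φ)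
    (xb : X) (hdom : φ xb ≠ ⊤)
    (σ : ℝ) (hσ : 0 < σ) (hmin : StrongLocalMin φ xb σ) :
    ∃ lamb > (0 : ℝ), ∀ lam : ℝ, 0 < lam → lam < lamb →
      StrongLocalMin (moreauEnv lam φ) xb (σ / (1 + σ * lam)) :=
  statement15_general φ hpb xb hdom σ hσ hmin
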